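/- Consider the random environment 𝐏^expl on ℤ^d, d ≥ 2, with parameter ε ∈ (1/(2d+1), 1/2]. Then for every x ∈ 𝔥, Q^𝔥_x ≥ ε/d holds 𝐏^expl-a.s.; consequently 𝐄[(Q^𝔥_x)^{−γ}] < ∞ for every γ > 0 and every x ∈ 𝔥, and 𝐏^expl satisfies condition (K)_α for every α > 0. Moreover 𝐏^expl satisfies condition (E)_0. -/

import Mathlib

open MeasureTheory ProbabilityTheory Filter Topology ENNReal
open scoped Classical

noncomputable section

namespace RWRE

/-- Sites of `ℤ^d`. -/
abbrev V (d : ℕ) := Fin d → ℤ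

/-- The `2d` directions: `(i, true)` is `e_i`, `(i, false)` is `-e_i`. -/
abbrev Dir (d : ℕ) := Fin d × Bool

/-- Trajectory space. -/
abbrev Traj (d : ℕ) := ℕ → V d

/-- The unit vector associated to a direction. -/
def dirVec (d : ℕ) (e : Dir d) : V d := fun i => if i = e.1 then (if e.2 then 1 else -1) else 0

/-- Probability vectors on the set of directions. -/
abbrev ProbVec (d : ℕ) := {p : Dir d → ℝ // (∀ e, 0 ≤ p e) ∧ ∑ e, p e = 1}

/-- Environments. -/
abbrev Env (d : ℕ) := V d → ProbVec d

/-- Transition probability at site `x` in direction `e`. -/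
def pmf {d : ℕ} (ω : Env d) (x : V d) (e : Dir d) : ℝ := (ω x).1 e

/-- Transition probability from `x` to `y` (zero if `y` is not a neighbour of `x`). -/
def stepProb {d : ℕ} (ω : Env d) (x y : V d) : ℝ :=
  ∑ e : Dir d, if y = x + dirVec d e then pmf ω x e else 0

/-- `P` is the family of quenched laws: `P ω x` is the law of the Markov chain started at `x`
with transition probabilities given by `ω`. -/
def IsQuenched {d : ℕ} (P : Env d → V d → Measure (Traj d)) : Prop :=
  (∀ ω x, IsProbabilityMeasure (P ω x)) ∧
  (∀ x, Measurable fun ω => P ω x) ∧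
  ∀ ω x (n : ℕ) (γ : ℕ → V d),
    (P ω x {X | ∀ k ≤ n, X k = γ k}).toReal
      = (if γ 0 = x then 1 else 0) * ∏ k ∈ Finset.range n, stepProb ω (γ k) (γ (k + 1))

/-- The annealed law `ℙ_x`. -/
def annealed {d : ℕ} (P : Env d → V d → Measure (Traj d)) (Pr : Measure (Env d)) (x : V d) :
    Measure (Traj d) := Pr.bind fun ω => P ω x

/-- The environment law is i.i.d. -/
def IsIID {d : ℕ} (Pr : Measure (Env d)) : Prop :=
  IsProbabilityMeasure Pr ∧
  iIndepFun (fun x ω => ω x) Pr ∧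
  ∀ x : V d, Pr.map (fun ω => ω x) = Pr.map (fun ω => ω 0)

/-- Ellipticity. -/
def Elliptic {d : ℕ} (Pr : Measure (Env d)) : Prop :=
  ∀ᵐ ω ∂Pr, ∀ x e, 0 < pmf ω x e

/-- Exit time of a set. -/
def exitTime {d : ℕ} (A : Set (V d)) (X : Traj d) : ℕ∞ :=
  ⨅ (n : ℕ) (_ : X n ∉ A), (n : ℕ∞)

/-- Hitting time of a set. -/
def hitTime {d : ℕ} (A : Set (V d)) (X : Traj d) : ℕ∞ :=
  ⨅ (n : ℕ) (_ : X n ∈ A), (n : ℕ∞)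

/-- Positive hitting time of a set. -/
def retTime {d : ℕ} (A : Set (V d)) (X : Traj d) : ℕ∞ :=
  ⨅ (n : ℕ) (_ : 1 ≤ n ∧ X n ∈ A), (n : ℕ∞)

/-- Scalar product of `ℓ ∈ ℝ^d` with a site of `ℤ^d`. -/
def dot {d : ℕ} (ℓ : Fin d → ℝ) (x : V d) : ℝ := ∑ i, ℓ i * (x i : ℝ)

/-- `ℓ` belongs to the unit sphere `S^{d-1}`. -/
def UnitVec {d : ℕ} (ℓ : Fin d → ℝ) : Prop := ∑ i, ℓ i ^ 2 = 1

/-- The walk, under the annealed law, is transient in the direction `ℓ`. -/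
def Transient {d : ℕ} (P : Env d → V d → Measure (Traj d)) (Pr : Measure (Env d))
    (ℓ : Fin d → ℝ) : Prop :=
  annealed P Pr 0 {X | Tendsto (fun n => dot ℓ (X n)) atTop atTop} = 1

/-- The trajectory rescaled to `ℝ^d`. -/
def toR {d : ℕ} (x : V d) : Fin d → ℝ := fun i => (x i : ℝ)

/-- The unit hypercube based at `x`. -/
def cube {d : ℕ} (x : V d) : Set (V d) := {y | ∀ i, y i = x i ∨ y i = x i + 1}

/-- The corners of the unit hypercube based at `0`, as a finite set. -/
def cubePts (d : ℕ) : Finset (V d) :=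
  Finset.univ.image fun s : Fin d → Bool => (fun i => if s i then 1 else 0 : V d)

/-- The (outer) boundary of a set of sites. -/
def bdry {d : ℕ} (A : Set (V d)) : Set (V d) :=
  {z | z ∉ A ∧ ∃ w ∈ A, ∑ i, |z i - w i| = 1}

/-- The boundary points adjacent to `y`. -/
def bdryAt {d : ℕ} (y : V d) (A : Set (V d)) : Set (V d) :=
  {z | z ∈ bdry A ∧ ∑ i, |z i - y i| = 1}

/-- `Q^C_y`: the largest transition probability leading out of `C` from `y`. -/
def Qmax {d : ℕ} (ω : Env d) (C : Set (V d)) (y : V d) : ℝ :=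
  ⨆ e : Dir d, if y + dirVec d e ∈ bdryAt y C then pmf ω y e else 0

/-- The event that the walk exits `C` through a neighbour of `y` before returning to `x`. -/
def exitVia {d : ℕ} (C : Set (V d)) (x y : V d) : Set (Traj d) :=
  {X | ∃ n : ℕ, X n ∈ bdryAt y C ∧ (∀ m < n, X m ∉ bdry C) ∧ ∀ m, 1 ≤ m → m < n → X m ≠ x}

/-- `Q̃^C_{x,y}`: the quenched probability, starting from `x`, of exiting `C` through a
neighbour of `y` before returning to `x`. -/
def Qtilde {d : ℕ} (P : Env d → V d → Measure (Traj d)) (ω : Env d) (C : Set (V d))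
    (x y : V d) : ℝ := ((P ω x) (exitVia C x y)).toReal

/-- A marked Markovian hypercube: a unit hypercube containing `0` discovered in a Markovian
fashion by revealing sites `f 0 = 0, f 1, ...` one at a time, together with marks. -/
structure MMH (d : ℕ) where
  /-- The successively revealed sites. -/
  f : ℕ → Env d → V d
  /-- The marks, indexed by the corners of the unit hypercube at `0`. -/
  mark : V d → Env d → ℝ
  /-- The base point `x₀(ω)` of the revealed hypercube. -/
  x0 : Env d → V d
  f_zero : ∀ ω, f 0 ω = 0
  f_meas : ∀ i, Measurable (f i)
  f_local : ∀ i (ω ω' : Env d), (∀ j ≤ i, ω' (f j ω) = ω (f j ω)) → f (i + 1) ω' = f (i + 1) ω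
  f_adj : ∀ i ω, i + 1 < 2 ^ d → f (i + 1) ω ∈ bdry {y | ∃ j ≤ i, f j ω = y}
  x0_cube : ∀ ω, cube (x0 ω) = {y | ∃ j < 2 ^ d, f j ω = y}
  mark_nonneg : ∀ x ω, 0 ≤ mark x ω
  mark_meas : ∀ x, Measurable (mark x)
  mark_local : ∀ x (ω ω' : Env d), (∀ y ∈ cube (x0 ω), ω' y = ω y) → mark x ω' = mark x ω

/-- Condition `(K)_α` with explicit constant `ε` (parts (1), (2), (3)). -/
def CondKE {d : ℕ} (P : Env d → V d → Measure (Traj d)) (Pr : Measure (Env d))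
    (α ε : ℝ) : Prop :=
  ∃ γ : V d → ℝ, (∀ x, 0 ≤ γ x) ∧
    (∀ x ∈ cubePts d, ∫⁻ ω, (ENNReal.ofReal (Qmax ω (cube 0) x)) ^ (-(γ x)) ∂Pr < ⊤) ∧
    ∃ H : MMH d,
      (∫⁻ ω, ∏ x ∈ cubePts d,
          (ENNReal.ofReal (Qtilde P ω (cube (H.x0 ω)) 0 (H.x0 ω + x))) ^ (-(H.mark x ω)) ∂Pr
        < ⊤) ∧
      ∀ᵐ ω ∂Pr, α + ε ≤ ∑ x ∈ cubePts d, min (γ x) (H.mark x ω)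

/-- Condition `(K)_α`. -/
def CondK {d : ℕ} (P : Env d → V d → Measure (Traj d)) (Pr : Measure (Env d)) (α : ℝ) : Prop :=
  ∃ ε > (0 : ℝ), CondKE P Pr α ε

/-- Condition `(E)_0`. -/
def CondE0 {d : ℕ} (Pr : Measure (Env d)) : Prop :=
  ∀ e : Dir d, ∃ η > (0 : ℝ), ∫⁻ ω, (ENNReal.ofReal (pmf ω 0 e)) ^ (-η) ∂Pr < ⊤

/-- The coordinates of `z ∈ ℤ^d` in the rotated frame `R`. -/
def tiltCoord {d : ℕ} (R : EuclideanSpace ℝ (Fin d) ≃ₗᵢ[ℝ] EuclideanSpace ℝ (Fin d))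
    (z : V d) : Fin d → ℝ :=
  WithLp.equiv 2 (Fin d → ℝ) (R.symm ((WithLp.equiv 2 (Fin d → ℝ)).symm fun j => (z j : ℝ)))

/-- The box `B^ℓ_{L,L',L̃}`: the image under the rotation `R` of
`(-L',L) × (-L̃,L̃)^{d-1}`, intersected with `ℤ^d`. -/
def polyBox {d : ℕ} (R : EuclideanSpace ℝ (Fin d) ≃ₗᵢ[ℝ] EuclideanSpace ℝ (Fin d))
    (L L' Lt : ℝ) : Set (V d) :=
  {z | (∀ i : Fin d, (i : ℕ) = 0 → tiltCoord R z i ∈ Set.Ioo (-L') L) ∧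
       ∀ i : Fin d, (i : ℕ) ≠ 0 → tiltCoord R z i ∈ Set.Ioo (-Lt) Lt}

/-- The first coordinate vector of `ℝ^d` as an element of Euclidean space. -/
def euc1 (d : ℕ) : EuclideanSpace ℝ (Fin d) :=
  (WithLp.equiv 2 (Fin d → ℝ)).symm fun i => if (i : ℕ) = 0 then 1 else 0

/-- The polynomial condition `(P)^ℓ_M`. -/
def CondP {d : ℕ} (P : Env d → V d → Measure (Traj d)) (Pr : Measure (Env d))
    (ℓ : Fin d → ℝ) (M : ℝ) : Prop :=
  ∃ R : EuclideanSpace ℝ (Fin d) ≃ₗᵢ[ℝ] EuclideanSpace ℝ (Fin d),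
    R (euc1 d) = (WithLp.equiv 2 (Fin d → ℝ)).symm ℓ ∧
    ∀ L : ℝ, 2 / 3 * 3 ^ (29 * d) ≤ L →
      ∃ L' ≤ 5 / 4 * L, ∃ Lt ≤ 72 * L ^ 3,
        annealed P Pr 0
          {X | ∃ n, X n ∉ polyBox R L L' Lt ∧ (∀ m < n, X m ∈ polyBox R L L' Lt) ∧
                dot ℓ (X n) < L}
          ≤ ENNReal.ofReal (L ^ (-M))

/-- The backtracking time `D = inf{n ≥ 0 : X_n·ℓ < X_0·ℓ}`. -/
def Dtime {d : ℕ} (ℓ : Fin d → ℝ) (X : Traj d) : ℕ∞ :=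
  ⨅ (n : ℕ) (_ : dot ℓ (X n) < dot ℓ (X 0)), (n : ℕ∞)

/-- The triples `(S_k, R_k, M_k)` of the regeneration structure. -/
def regenAux {d : ℕ} (ℓ : Fin d → ℝ) (a : ℝ) (X : Traj d) : ℕ → ℕ∞ × ℕ∞ × EReal
  | 0 => (0, 0, ((dot ℓ (X 0) : ℝ) : EReal))
  | k + 1 =>
    let M := (regenAux ℓ a X k).2.2
    let S : ℕ∞ := ⨅ (n : ℕ) (_ : M + (a : EReal) < ((dot ℓ (X n) : ℝ) : EReal)), (n : ℕ∞)
    let R : ℕ∞ := ⨅ (n : ℕ) (_ : (n : ℕ∞) = S), (S + Dtime ℓ fun m => X (n + m))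
    (S, R, ⨆ (n : ℕ) (_ : (n : ℕ∞) ≤ R), ((dot ℓ (X n) : ℝ) : EReal))

/-- The first regeneration time `τ₁ = S_K`. -/
def tau1 {d : ℕ} (ℓ : Fin d → ℝ) (a : ℝ) (X : Traj d) : ℕ∞ :=
  ⨅ (k : ℕ) (_ : 1 ≤ k ∧ (regenAux ℓ a X k).1 ≠ ⊤ ∧ (regenAux ℓ a X k).2.1 = ⊤),
    (regenAux ℓ a X k).1

/-- The `ℓ¹` norm on `ℤ^d`. -/
def norm1 {d : ℕ} (x : V d) : ℤ := ∑ i, |x i|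

/-- `ℙ`-expectation, under the annealed law started at `x`, of `(T^ex_𝔥)^α`. -/
def cubeExitMoment {d : ℕ} (P : Env d → V d → Measure (Traj d)) (Pr : Measure (Env d))
    (x : V d) (α : ℝ) : ℝ≥0∞ :=
  ∫⁻ X, ((exitTime (cube 0) X : ℝ≥0∞)) ^ α ∂(annealed P Pr x)

/-- The uniform probability measure on the set of directions. -/
def uniformDir (d : ℕ) : Measure (Dir d) :=
  ((Fintype.card (Dir d) : ℝ≥0∞))⁻¹ • ∑ e : Dir d, Measure.dirac e

/-- The transition vector of the example environment `𝐏^expl` with strength `ε`, as a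
function of the variables `(T, i₀)`: direction `i₀` gets probability `1/T`, the remaining
"positive" directions share `1 - ε` (minus `1/T` if `i₀` is positive), and the remaining
"negative" directions share `ε` (minus `1/T` if `i₀` is negative). -/
def pexpl (d : ℕ) (ε : ℝ) (ti : ℝ × Dir d) : Dir d → ℝ := fun e =>
  if e = ti.2 then 1 / ti.1
  else if e.2 then
    (1 - ε - (if ti.2.2 then 1 / ti.1 else 0)) / ((d : ℝ) - (if ti.2.2 then 1 else 0))
  else (ε - (if ti.2.2 then 0 else 1 / ti.1)) / ((d : ℝ) - (if ti.2.2 then 0 else 1))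

/-- The law `𝐏` is the i.i.d. environment `𝐏^expl` with parameter `ε`: the common site
marginal is the law of `pexpl (T, i₀)` where `T ≥ 2d+1` a.s. with
`𝐄[T^{1/(4d)}] = ∞`, `𝐄[T^{1/(8d)}] < ∞`, and `i₀` is an independent uniform direction. -/
def IsPexpl {d : ℕ} (Pr : Measure (Env d)) (ε : ℝ) : Prop :=
  IsIID Pr ∧
  ∃ μT : Measure ℝ, IsProbabilityMeasure μT ∧
    μT {t | 2 * (d : ℝ) + 1 ≤ t} = 1 ∧
    (∫⁻ t, ENNReal.ofReal (t ^ ((1 : ℝ) / (4 * d))) ∂μT = ⊤) ∧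
    (∫⁻ t, ENNReal.ofReal (t ^ ((1 : ℝ) / (8 * d))) ∂μT < ⊤) ∧
    Pr.map (fun ω => ((ω 0).1 : Dir d → ℝ)) = (μT.prod (uniformDir d)).map (pexpl d ε)

/-!
Whatever `(T, i₀)` is, every corner `x` of `𝔥` has an exit direction of probability at least
`ε / d`: a positive direction other than `i₀` gets at least `ε / d` because `ε ≤ 1/2` and
`T ≥ 2d + 1`; if `x = 0` and `i₀` is negative, either `1/T ≥ ε / d` or the other negative
directions get `(ε - 1/T) / (d - 1) ≥ ε / d`. A deterministic lower bound gives all negative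
moments of `Q^𝔥_x`. For `(K)_α`, reveal `𝔥` itself and put the mark `α + 1` on the corner `0`
only: from `0` the walk leaves `𝔥` in one step with probability at least `Q^𝔥_0 ≥ ε / d`.
For `(E)_0`, every `p(0, e)` is `1/T` or at least `(ε - 1/(2d+1)) / d`, so
`p(0, e)^{-1/(8d)} ≤ T^{1/(8d)} + C`, which is integrable.
-/

variable {d : ℕ}

lemma dirVec_injective : Function.Injective (dirVec d) := by
  rintro ⟨j, b⟩ ⟨j', b'⟩ h
  have h1 := congrFun h j
  by_cases hj : j = j'
  · subst hj
    simp only [dirVec] at h1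
    cases b <;> cases b' <;> simp_all
  · simp only [dirVec, if_neg hj] at h1
    cases b <;> simp at h1

lemma sum_abs_dirVec (e : Dir d) : ∑ i, |dirVec d e i| = 1 := by
  rcases e with ⟨j, _ | _⟩ <;> simp [dirVec, apply_ite]

lemma stepProb_add_dirVec (ω : Env d) (x : V d) (e : Dir d) :
    stepProb ω x (x + dirVec d e) = pmf ω x e := by
  rw [stepProb, Finset.sum_eq_single e, if_pos rfl]
  · exact fun e' _ hne => if_neg fun h => hne (dirVec_injective (add_left_cancel h).symm)
  · simp

lemma add_dirVec_mem_bdryAt {A : Set (V d)} {x : V d} (hx : x ∈ A) {e : Dir d}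
    (he : x + dirVec d e ∉ A) : x + dirVec d e ∈ bdryAt x A := by
  have hdist : ∑ i, |(x + dirVec d e) i - x i| = 1 := by
    simpa using sum_abs_dirVec e
  exact ⟨⟨he, x, hx, hdist⟩, hdist⟩

lemma add_dirVec_notMem_cube_zero {x : V d} {e : Dir d}
    (he : x e.1 = if e.2 then 1 else 0) : x + dirVec d e ∉ cube 0 := by
  intro h
  have := h e.1
  cases hb : e.2 <;> simp_all [dirVec]

lemma self_mem_cube (x : V d) : x ∈ cube x := fun _ => Or.inl rfl

lemma zero_mem_cubePts : (0 : V d) ∈ cubePts d :=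
  Finset.mem_image.2 ⟨fun _ => false, Finset.mem_univ _, by ext; simp⟩

lemma mem_cube_zero_of_mem_cubePts {x : V d} (hx : x ∈ cubePts d) : x ∈ cube 0 := by
  obtain ⟨s, -, rfl⟩ := Finset.mem_image.1 hx
  intro i
  cases s i <;> simp

section Quenched

variable {P : Env d → V d → Measure (Traj d)}

lemma pmf_le_Qtilde (hP : IsQuenched P) (ω : Env d) {C : Set (V d)} {y : V d} (hy : y ∈ C)
    {e : Dir d} (he : y + dirVec d e ∈ bdryAt y C) : pmf ω y e ≤ Qtilde P ω C y y := by
  let γ : ℕ → V d := fun k => if k = 0 then y else y + dirVec d e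
  have hstep : (P ω y {X | ∀ k ≤ 1, X k = γ k}).toReal = pmf ω y e := by
    simp [hP.2.2 ω y 1 γ, γ, stepProb_add_dirVec]
  have hsub : {X : Traj d | ∀ k ≤ 1, X k = γ k} ⊆ exitVia C y y := by
    intro X hX
    refine ⟨1, by simpa [hX 1 le_rfl, γ] using he, fun m hm => ?_, fun m _ _ => by omega⟩
    rw [Nat.lt_one_iff.1 hm, hX 0 zero_le_one]
    exact fun hb => hb.1 hy
  have := hP.1 ω y
  rw [← hstep]
  exact ENNReal.toReal_mono (measure_ne_top _ _) (measure_mono hsub)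

lemma Qmax_le_Qtilde (hP : IsQuenched P) (ω : Env d) {C : Set (V d)} {y : V d} (hy : y ∈ C) :
    Qmax ω C y ≤ Qtilde P ω C y y := by
  refine Real.iSup_le (fun e => ?_) ENNReal.toReal_nonneg
  split_ifs with he
  · exact pmf_le_Qtilde hP ω hy he
  · exact ENNReal.toReal_nonneg

end Quenched

lemma ofReal_rpow_neg_le {a b γ : ℝ} (ha : 0 < a) (hab : a ≤ b) (hγ : 0 ≤ γ) :
    ENNReal.ofReal b ^ (-γ) ≤ ENNReal.ofReal (a ^ (-γ)) := by
  rw [ENNReal.ofReal_rpow_of_pos (ha.trans_le hab)]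
  exact ENNReal.ofReal_le_ofReal (Real.rpow_le_rpow_of_nonpos ha hab (neg_nonpos.2 hγ))

lemma lintegral_ofReal_rpow_neg_lt_top {α : Type*} [MeasurableSpace α] {μ : Measure α}
    [IsFiniteMeasure μ] {f : α → ℝ} {c γ : ℝ} (hc : 0 < c) (hf : ∀ᵐ a ∂μ, c ≤ f a)
    (hγ : 0 ≤ γ) : ∫⁻ a, ENNReal.ofReal (f a) ^ (-γ) ∂μ < ⊤ :=
  calc ∫⁻ a, ENNReal.ofReal (f a) ^ (-γ) ∂μ
      ≤ ∫⁻ _, ENNReal.ofReal (c ^ (-γ)) ∂μ :=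
        lintegral_mono_ae (hf.mono fun _ ha => ofReal_rpow_neg_le hc ha hγ)
    _ < ⊤ := by
        rw [lintegral_const]
        exact ENNReal.mul_lt_top ENNReal.ofReal_lt_top (measure_lt_top μ _)

section Pexpl

variable {ε t : ℝ} {i e : Dir d}

lemma div_le_pexpl_of_pos (hd : 2 ≤ d) (ht : 2 * (d : ℝ) + 1 ≤ t) (hε : ε ≤ 1 / 2)
    (hne : e ≠ i) (he : e.2 = true) :
    ε / d ≤ pexpl d ε (t, i) e := by
  have hD : (2 : ℝ) ≤ d := by exact_mod_cast hd
  simp only [pexpl, if_neg hne, he, if_true]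
  cases i.2
  · simp only [Bool.false_eq_true, if_false, sub_zero]
    gcongr
    linarith
  · simp only [if_true]
    have ht' : 1 / t ≤ 1 / (2 * (d : ℝ) + 1) := one_div_le_one_div_of_le (by positivity) ht
    have hinv : 1 / (2 * (d : ℝ) + 1) * (2 * d + 1) = 1 := by field_simp
    have h1 : 1 / t * d ≤ 1 / (2 * (d : ℝ) + 1) * d := by gcongr
    have h2 : ε * (2 * d - 1) ≤ 1 / 2 * (2 * d - 1) := by gcongr; linarith
    rw [div_le_div_iff₀ (by positivity) (by linarith)]
    linarith [one_div_pos.2 (by positivity : (0 : ℝ) < 2 * d + 1)]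

lemma pexpl_of_neg_of_pos (hne : e ≠ i) (he : e.2 = false) (hi : i.2 = true) :
    pexpl d ε (t, i) e = ε / d := by
  simp [pexpl, hne, he, hi]

lemma div_le_pexpl_of_neg (hd : 2 ≤ d) (hne : e ≠ i) (he : e.2 = false) (h : 1 / t < ε / d) :
    ε / d ≤ pexpl d ε (t, i) e := by
  cases hi : i.2
  · have hD : (2 : ℝ) ≤ d := by exact_mod_cast hd
    simp only [pexpl, if_neg hne, he, hi, Bool.false_eq_true, if_false, sub_zero]
    rw [div_le_div_iff₀ (by positivity) (by linarith)]
    have : (d : ℝ) * (1 / t) < ε := by rwa [lt_div_iff₀' (by positivity)] at h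
    linarith
  · exact (pexpl_of_neg_of_pos hne he hi).ge

lemma div_le_pexpl_of_ne (hd : 2 ≤ d) (ht : 2 * (d : ℝ) + 1 ≤ t)
    (hε : 1 / (2 * (d : ℝ) + 1) < ε) (hε' : ε ≤ 1 / 2) (hne : e ≠ i) :
    (ε - 1 / (2 * (d : ℝ) + 1)) / d ≤ pexpl d ε (t, i) e := by
  have hD : (2 : ℝ) ≤ d := by exact_mod_cast hd
  have hlow : (ε - 1 / (2 * (d : ℝ) + 1)) / d ≤ ε / d := by
    gcongr
    exact sub_le_self _ (by positivity)
  cases he : e.2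
  · cases hi : i.2
    · simp only [pexpl, if_neg hne, he, hi, Bool.false_eq_true, if_false, sub_zero]
      calc (ε - 1 / (2 * (d : ℝ) + 1)) / d ≤ (ε - 1 / (2 * (d : ℝ) + 1)) / (d - 1) :=
            div_le_div_of_nonneg_left (by linarith) (by linarith) (by linarith)
        _ ≤ (ε - 1 / t) / (d - 1) := by gcongr; linarith
    · exact hlow.trans (pexpl_of_neg_of_pos hne he hi).ge
  · exact hlow.trans (div_le_pexpl_of_pos hd ht hε' hne he)

lemma exists_exit_div_le_pexpl (hd : 2 ≤ d) (ht : 2 * (d : ℝ) + 1 ≤ t) (hε : ε ≤ 1 / 2)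
    (i : Dir d) {x : V d} (hx : x ∈ cube 0) :
    ∃ e, x + dirVec d e ∉ cube 0 ∧ ε / d ≤ pexpl d ε (t, i) e := by
  have hx01 : ∀ k, x k = 0 ∨ x k = 1 := fun k => by simpa using hx k
  obtain ⟨k, hk⟩ := @exists_ne _ (Fin.nontrivial_iff_two_le.2 hd) i.1
  have hki : ∀ b, ((k, b) : Dir d) ≠ i := fun b h => hk (congrArg Prod.fst h)
  cases hi : i.2
  · by_cases hone : ∃ j, x j = 1
    · obtain ⟨j, hj⟩ := hone
      have hji : ((j, true) : Dir d) ≠ i := fun h => by simp [← h] at hi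
      exact ⟨(j, true), add_dirVec_notMem_cube_zero (by simpa using hj),
        div_le_pexpl_of_pos hd ht hε hji rfl⟩
    have hzero : ∀ j, x j = 0 := fun j => (hx01 j).resolve_right fun h => hone ⟨j, h⟩
    by_cases hsmall : ε / d ≤ 1 / t
    · exact ⟨i, add_dirVec_notMem_cube_zero (by simp [hi, hzero]),
        by rwa [pexpl, if_pos rfl]⟩
    · exact ⟨(k, false), add_dirVec_notMem_cube_zero (by simp [hzero]),
        div_le_pexpl_of_neg hd (hki _) rfl (not_le.1 hsmall)⟩
  · rcases hx01 k with hxk | hxk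
    · exact ⟨(k, false), add_dirVec_notMem_cube_zero (by simpa using hxk),
        (pexpl_of_neg_of_pos (hki _) rfl hi).ge⟩
    · exact ⟨(k, true), add_dirVec_notMem_cube_zero (by simpa using hxk),
        div_le_pexpl_of_pos hd ht hε (hki _) rfl⟩

lemma ofReal_pexpl_rpow_neg_le (hd : 2 ≤ d) (ht : 2 * (d : ℝ) + 1 ≤ t)
    (hε : 1 / (2 * (d : ℝ) + 1) < ε) (hε' : ε ≤ 1 / 2) {η : ℝ} (hη : 0 ≤ η) :
    ENNReal.ofReal (pexpl d ε (t, i) e) ^ (-η) ≤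
      ENNReal.ofReal (t ^ η) + ENNReal.ofReal (((ε - 1 / (2 * (d : ℝ) + 1)) / d) ^ (-η)) := by
  have hD : (2 : ℝ) ≤ d := by exact_mod_cast hd
  have ht0 : 0 < t := by linarith
  by_cases hne : e = i
  · subst hne
    rw [pexpl, if_pos rfl, ENNReal.ofReal_rpow_of_pos (by positivity), one_div,
      Real.inv_rpow ht0.le, Real.rpow_neg ht0.le, inv_inv]
    exact le_self_add
  · have hc : 0 < (ε - 1 / (2 * (d : ℝ) + 1)) / d := div_pos (by linarith) (by linarith)
    exact (ofReal_rpow_neg_le hc (div_le_pexpl_of_ne hd ht hε hε' hne) hη).trans le_add_self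

lemma pexpl_measurable (d : ℕ) (ε : ℝ) : Measurable (pexpl d ε) := by
  refine measurable_pi_lambda _ fun e => measurable_from_prod_countable_left fun i => ?_
  simp only [pexpl]
  split_ifs <;> fun_prop

end Pexpl

lemma uniformDir_isProbabilityMeasure (hd : 0 < d) : IsProbabilityMeasure (uniformDir d) := by
  constructor
  simp only [uniformDir, Measure.smul_apply, Measure.coe_finsetSum, Finset.sum_apply,
    measure_univ, Finset.sum_const, Finset.card_univ, nsmul_eq_mul, mul_one, smul_eq_mul]
  exact ENNReal.inv_mul_cancel (by simp; omega) (ENNReal.natCast_ne_top _)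

lemma measurable_site (x : V d) : Measurable fun ω : Env d => ((ω x).1 : Dir d → ℝ) :=
  measurable_subtype_coe.comp (measurable_pi_apply x)

namespace IsPexpl

variable {Pr : Measure (Env d)} {ε : ℝ}

lemma exists_site_law (hPr : IsPexpl Pr ε) :
    ∃ μT : Measure ℝ, IsProbabilityMeasure μT ∧
      (∀ᵐ t ∂μT, 2 * (d : ℝ) + 1 ≤ t) ∧
      (∫⁻ t, ENNReal.ofReal (t ^ ((1 : ℝ) / (8 * d))) ∂μT < ⊤) ∧
      ∀ x : V d, Pr.map (fun ω => ((ω x).1 : Dir d → ℝ)) =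
        (μT.prod (uniformDir d)).map (pexpl d ε) := by
  obtain ⟨⟨-, -, hiid⟩, μT, hμT, hT, -, hmom, hlaw⟩ := hPr
  refine ⟨μT, hμT, ?_, hmom, fun x => ?_⟩
  · rwa [ae_iff_measure_eq (p := fun t => 2 * (d : ℝ) + 1 ≤ t)
      measurableSet_Ici.nullMeasurableSet, measure_univ]
  · have hcoe : Measurable ((↑) : ProbVec d → Dir d → ℝ) := measurable_subtype_coe
    calc Pr.map (fun ω => ((ω x).1 : Dir d → ℝ)) = (Pr.map fun ω => ω x).map (↑) :=
          (Measure.map_map hcoe (measurable_pi_apply x)).symm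
      _ = (Pr.map fun ω => ω 0).map (↑) := by rw [hiid x]
      _ = _ := (Measure.map_map hcoe (measurable_pi_apply 0)).trans hlaw

lemma ae_site_mem (hPr : IsPexpl Pr ε) (x : V d) {S : Set (Dir d → ℝ)} (hS : MeasurableSet S)
    (hpexpl : ∀ t : ℝ, 2 * (d : ℝ) + 1 ≤ t → ∀ i, pexpl d ε (t, i) ∈ S) :
    ∀ᵐ ω ∂Pr, ((ω x).1 : Dir d → ℝ) ∈ S := by
  obtain ⟨μT, -, hT, -, hlaw⟩ := hPr.exists_site_law
  refine (ae_map_iff (measurable_site x).aemeasurable hS).1 ?_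
  rw [hlaw x, ae_map_iff (pexpl_measurable d ε).aemeasurable hS]
  exact Measure.quasiMeasurePreserving_fst.ae hT |>.mono fun ti ht => hpexpl ti.1 ht ti.2

theorem ae_div_le_Qmax (hd : 2 ≤ d) (hPr : IsPexpl Pr ε) (hε : ε ≤ 1 / 2) :
    ∀ᵐ ω ∂Pr, ∀ x ∈ cube (0 : V d), ε / d ≤ Qmax ω (cube 0) x := by
  refine (ae_ball_iff (Set.to_countable _)).2 fun x hx => ?_
  let S : Set (Dir d → ℝ) :=
    {p | ε / d ≤ ⨆ e, if x + dirVec d e ∈ bdryAt x (cube 0) then p e else 0}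
  have hS : MeasurableSet S :=
    measurableSet_le measurable_const (Measurable.iSup fun e => by split_ifs <;> fun_prop)
  refine hPr.ae_site_mem x hS fun t ht i => ?_
  obtain ⟨e, hexit, he⟩ := exists_exit_div_le_pexpl hd ht hε i hx
  refine he.trans (le_ciSup_of_le (Set.finite_range _).bddAbove e ?_)
  rw [if_pos (add_dirVec_mem_bdryAt hx hexit)]

theorem condE0 (hd : 2 ≤ d) (hPr : IsPexpl Pr ε) (hε : 1 / (2 * (d : ℝ) + 1) < ε)
    (hε' : ε ≤ 1 / 2) : CondE0 Pr := by
  intro e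
  obtain ⟨μT, hμT, hT, hmom, hlaw⟩ := hPr.exists_site_law
  have : IsProbabilityMeasure (uniformDir d) := uniformDir_isProbabilityMeasure (by omega)
  set η : ℝ := 1 / (8 * d)
  set c : ℝ := (ε - 1 / (2 * (d : ℝ) + 1)) / d
  have hg : Measurable fun p : Dir d → ℝ => ENNReal.ofReal (p e) ^ (-η) := by fun_prop
  refine ⟨η, by positivity, ?_⟩
  calc ∫⁻ ω, ENNReal.ofReal (pmf ω 0 e) ^ (-η) ∂Pr
      = ∫⁻ ti, ENNReal.ofReal (pexpl d ε ti e) ^ (-η) ∂(μT.prod (uniformDir d)) := by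
        rw [← lintegral_map hg (pexpl_measurable d ε), ← hlaw 0,
          lintegral_map hg (measurable_site 0)]
        rfl
    _ ≤ ∫⁻ ti : ℝ × Dir d, ENNReal.ofReal (ti.1 ^ η) + ENNReal.ofReal (c ^ (-η))
          ∂(μT.prod (uniformDir d)) :=
        lintegral_mono_ae <| (Measure.quasiMeasurePreserving_fst.ae hT).mono fun ti ht =>
          ofReal_pexpl_rpow_neg_le hd ht hε hε' (by positivity)
    _ = ∫⁻ t, ENNReal.ofReal (t ^ η) ∂μT + ENNReal.ofReal (c ^ (-η)) := by
        rw [lintegral_add_right _ measurable_const, lintegral_const, measure_univ, mul_one,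
          ← (measurePreserving_fst (μ := μT) (ν := uniformDir d)).lintegral_comp (by fun_prop)]
    _ < ⊤ := ENNReal.add_lt_top.2 ⟨hmom, ENNReal.ofReal_lt_top⟩

end IsPexpl

def cubeCorner (d j : ℕ) : V d := fun i => if j.testBit i then 1 else 0

lemma cubeCorner_zero : cubeCorner d 0 = 0 := by
  ext
  simp [cubeCorner]

lemma cubeCorner_injOn : Set.InjOn (cubeCorner d) (Set.Iio (2 ^ d)) := by
  intro a ha b hb h
  refine Nat.eq_of_testBit_eq fun i => ?_
  by_cases hi : i < d
  · have := congrFun h ⟨i, hi⟩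
    simp only [cubeCorner] at this
    split_ifs at this <;> simp_all
  · have hd : 2 ^ d ≤ 2 ^ i := Nat.pow_le_pow_right two_pos (not_lt.1 hi)
    rw [Nat.testBit_lt_two_pow (ha.trans_le hd), Nat.testBit_lt_two_pow (hb.trans_le hd)]

lemma sum_abs_cubeCorner_two_pow_add_sub {k j : ℕ} (hk : k < d) (hj : j < 2 ^ k) :
    ∑ p, |cubeCorner d (2 ^ k + j) p - cubeCorner d j p| = 1 := by
  rw [Finset.sum_eq_single ⟨k, hk⟩]
  · simp [cubeCorner, Nat.testBit_two_pow_add_eq, Nat.testBit_lt_two_pow hj]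
  · intro p _ hp
    have hpk : (p : ℕ) ≠ k := fun h => hp (Fin.ext h)
    have : (2 ^ k + j).testBit p = j.testBit p := by
      rcases hpk.lt_or_gt with h | h
      · exact Nat.testBit_two_pow_add_gt h j
      · have hkp : 2 ^ (k + 1) ≤ 2 ^ (p : ℕ) := Nat.pow_le_pow_right two_pos h
        rw [Nat.testBit_lt_two_pow (by omega), Nat.testBit_lt_two_pow (by omega)]
    simp [cubeCorner, this]
  · simp

lemma cubeCorner_succ_mem_bdry {n : ℕ} (hn : n + 1 < 2 ^ d) :
    cubeCorner d (n + 1) ∈ bdry {y | ∃ j ≤ n, cubeCorner d j = y} := by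
  -- `n + 1` is adjacent to `n + 1` with its leading binary digit cleared.
  obtain ⟨k, hk, hk'⟩ : ∃ k, 2 ^ k ≤ n + 1 ∧ n + 1 < 2 ^ k * 2 :=
    ⟨_, Nat.log2_self_le n.succ_ne_zero, pow_succ 2 _ ▸ Nat.lt_log2_self⟩
  have hkd : k < d := (Nat.pow_lt_pow_iff_right one_lt_two).1 (by omega)
  obtain ⟨j, hj⟩ : ∃ j, n + 1 = 2 ^ k + j := ⟨n + 1 - 2 ^ k, by omega⟩
  refine ⟨?_, cubeCorner d j, ⟨j, by omega, rfl⟩, ?_⟩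
  · rintro ⟨j', hj', heq⟩
    have := cubeCorner_injOn (by simp; omega) hn heq
    omega
  · rw [hj]
    exact sum_abs_cubeCorner_two_pow_add_sub hkd (by omega)

lemma cube_zero_eq_cubeCorner : cube (0 : V d) = {y | ∃ j < 2 ^ d, cubeCorner d j = y} := by
  ext y
  constructor
  · intro hy
    let f : Fin d → Fin 2 := fun i => if y i = 1 then 1 else 0
    refine ⟨finFunctionFinEquiv f, (finFunctionFinEquiv f).isLt, funext fun i => ?_⟩
    have hdigit := finFunctionFinEquiv_symm_apply_val (finFunctionFinEquiv f) i
    rw [Equiv.symm_apply_apply] at hdigit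
    rcases hy i with h | h <;>
      simp_all [cubeCorner, Nat.testBit_eq_decide_div_mod_eq, f]
  · rintro ⟨j, -, rfl⟩ i
    by_cases h : j.testBit i <;> simp [cubeCorner, h]

def zeroCubeMMH (d : ℕ) (m : V d → ℝ) (hm : ∀ x, 0 ≤ m x) : MMH d where
  f j _ := cubeCorner d j
  mark x _ := m x
  x0 _ := 0
  f_zero _ := cubeCorner_zero
  f_meas _ := measurable_const
  f_local _ _ _ _ := rfl
  f_adj _ _ hi := cubeCorner_succ_mem_bdry hi
  x0_cube _ := cube_zero_eq_cubeCorner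
  mark_nonneg x _ := hm x
  mark_meas _ := measurable_const
  mark_local _ _ _ _ := rfl

theorem condKE_of_ae_le_Qmax {P : Env d → V d → Measure (Traj d)} (hP : IsQuenched P)
    {Pr : Measure (Env d)} [IsFiniteMeasure Pr] {c α : ℝ} (hc : 0 < c) (hα : 0 ≤ α)
    (hQ : ∀ᵐ ω ∂Pr, ∀ x ∈ cube (0 : V d), c ≤ Qmax ω (cube 0) x) :
    CondKE P Pr α 1 := by
  let m : V d → ℝ := fun x => if x = 0 then α + 1 else 0
  have hm : ∀ x, 0 ≤ m x := fun x => by dsimp only [m]; split_ifs <;> positivity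
  have hQ0 : ∀ᵐ ω ∂Pr, c ≤ Qtilde P ω (cube 0) 0 0 := hQ.mono fun ω h =>
    (h 0 (self_mem_cube 0)).trans (Qmax_le_Qtilde hP ω (self_mem_cube 0))
  refine ⟨fun _ => α + 1, fun _ => by positivity, fun x hx => ?_, zeroCubeMMH d m hm, ?_,
    ae_of_all _ fun ω => ?_⟩
  · exact lintegral_ofReal_rpow_neg_lt_top hc
      (hQ.mono fun ω h => h x (mem_cube_zero_of_mem_cubePts hx)) (by positivity)
  · have hprod : ∀ ω, ∏ x ∈ cubePts d,
        ENNReal.ofReal (Qtilde P ω (cube 0) 0 (0 + x)) ^ (-m x) =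
          ENNReal.ofReal (Qtilde P ω (cube 0) 0 0) ^ (-(α + 1)) := fun ω => by
      rw [Finset.prod_eq_single_of_mem 0 zero_mem_cubePts fun x _ hx => by simp [m, hx]]
      simp [m]
    simpa only [zeroCubeMMH, hprod] using
      lintegral_ofReal_rpow_neg_lt_top hc hQ0 (by positivity)
  · rw [Finset.sum_eq_single_of_mem 0 zero_mem_cubePts fun x _ hx => by
      simp only [zeroCubeMMH, m, if_neg hx]
      exact min_eq_right (by positivity)]
    simp [zeroCubeMMH, m]

/-- For the environment `𝐏^expl` with `ε ∈ (1/(2d+1), 1/2]`: a.s.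
`Q^𝔥_x ≥ ε/d` for every corner `x` of the unit hypercube; consequently all negative moments
of `Q^𝔥_x` are finite and condition `(K)_α` holds for every `α > 0`. Moreover `(E)_0` holds. -/
theorem pexpl_condK
    (d : ℕ) (hd : 2 ≤ d)
    (P : Env d → V d → Measure (Traj d)) (hP : IsQuenched P)
    (Pr : Measure (Env d)) (ε : ℝ) (hPr : IsPexpl Pr ε)
    (hε : 1 / (2 * (d : ℝ) + 1) < ε ∧ ε ≤ 1 / 2) :
    (∀ᵐ ω ∂Pr, ∀ x ∈ cube (0 : V d), ε / d ≤ Qmax ω (cube 0) x) ∧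
    (∀ γ : ℝ, 0 < γ → ∀ x ∈ cube (0 : V d),
      ∫⁻ ω, (ENNReal.ofReal (Qmax ω (cube 0) x)) ^ (-γ) ∂Pr < ⊤) ∧
    (∀ α : ℝ, 0 < α → CondK P Pr α) ∧
    CondE0 Pr := by
  obtain ⟨hε, hε'⟩ := hε
  have : IsProbabilityMeasure Pr := hPr.1.1
  have hεd : 0 < ε / d := div_pos ((one_div_pos.2 (by positivity)).trans hε) (by positivity)
  have hQ := hPr.ae_div_le_Qmax hd hε'
  refine ⟨hQ, fun γ hγ x hx => ?_, fun α hα => ⟨1, one_pos, ?_⟩, hPr.condE0 hd hε hε'⟩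
  · exact lintegral_ofReal_rpow_neg_lt_top hεd (hQ.mono fun ω h => h x hx) hγ.le
  · exact condKE_of_ae_le_Qmax hP hεd hα.le hQ

end RWRE
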